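/- Let C be Curry's sentence, satisfying C = (T(⌜C⌝) → l) where l is a sentence with I_p(l) = ⊥ and I_f(l) = ⊥. Then I_p(C) = | and I_f(C) = ⊤. -/

import Mathlib

/-- Three truth values of Strong Kleene semantics: true, false, undetermined. -/
inductive K3 : Type
  | t : K3
  | f : K3
  | u : K3
deriving DecidableEq

/-- Strong Kleene negation. -/
def kneg : K3 → K3
  | .t => .f
  | .f => .t
  | .u => .u

/-- Strong Kleene conjunction. -/
def kand : K3 → K3 → K3
  | .t, x => x
  | .f, _ => .f
  | .u, .t => .u
  | .u, .f => .f
  | .u, .u => .u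

/-- Strong Kleene disjunction. -/
def kor : K3 → K3 → K3
  | .t, _ => .t
  | .f, x => x
  | .u, .t => .t
  | .u, .f => .u
  | .u, .u => .u

/-- Strong Kleene conditional: ¬φ ∨ ψ. -/
def kimp (x y : K3) : K3 := kor (kneg x) y

/-- Strong Kleene biconditional. -/
def kiff : K3 → K3 → K3
  | .t, .t => .t
  | .f, .f => .t
  | .t, .f => .f
  | .f, .t => .f
  | _, _ => .u

/-- Information order on K3: `|` below everything, classical values incomparable. -/
def kle (x y : K3) : Prop := x = K3.u ∨ x = y

/-- Sentences of a language with a truth predicate: atoms, truth attributions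
`T⌜φ⌝`, and the classical connectives. -/
inductive Sent : Type
  | atom : Nat → Sent
  | tr : Sent → Sent
  | neg : Sent → Sent
  | conj : Sent → Sent → Sent
  | disj : Sent → Sent → Sent
  | impl : Sent → Sent → Sent
  | biimp : Sent → Sent → Sent

/-- `Ip` satisfies the Strong Kleene conditions on compound sentences. -/
def SKConditions (Ip : Sent → K3) : Prop :=
  (∀ φ, Ip (Sent.neg φ) = kneg (Ip φ)) ∧
  (∀ φ ψ, Ip (Sent.conj φ ψ) = kand (Ip φ) (Ip ψ)) ∧
  (∀ φ ψ, Ip (Sent.disj φ ψ) = kor (Ip φ) (Ip ψ)) ∧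
  (∀ φ ψ, Ip (Sent.impl φ ψ) = kimp (Ip φ) (Ip ψ)) ∧
  (∀ φ ψ, Ip (Sent.biimp φ ψ) = kiff (Ip φ) (Ip ψ))

/-- `Ip` is a fixed point: truth attributions get the value of the attributed
sentence. -/
def FixedPoint (Ip : Sent → K3) : Prop :=
  SKConditions Ip ∧ ∀ φ, Ip (Sent.tr φ) = Ip φ

/-- `If'` satisfies the classical recursive conditions on compound sentences. -/
def ClassicalConditions (If' : Sent → Bool) : Prop :=
  (∀ φ, If' (Sent.neg φ) = !(If' φ)) ∧
  (∀ φ ψ, If' (Sent.conj φ ψ) = (If' φ && If' ψ)) ∧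
  (∀ φ ψ, If' (Sent.disj φ ψ) = (If' φ || If' ψ)) ∧
  (∀ φ ψ, If' (Sent.impl φ ψ) = (!(If' φ) || If' ψ)) ∧
  (∀ φ ψ, If' (Sent.biimp φ ψ) = (If' φ == If' ψ))

/-- The final semantics condition on the truth predicate: `T⌜φ⌝` is true
exactly when `φ` is true in the primary semantics. -/
def FinalTruth (Ip : Sent → K3) (If' : Sent → Bool) : Prop :=
  ∀ φ, If' (Sent.tr φ) = decide (Ip φ = K3.t)

theorem kimp_f_right (x : K3) : kimp x K3.f = kneg x := by
  cases x <;> rfl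

theorem eq_kneg_iff (x : K3) : x = kneg x ↔ x = K3.u := by
  cases x <;> decide

theorem eq_kimp_f_iff (x : K3) : x = kimp x K3.f ↔ x = K3.u := by
  rw [kimp_f_right, eq_kneg_iff]

theorem FixedPoint.impl_tr {Ip : Sent → K3} (hIp : FixedPoint Ip) (φ ψ : Sent) :
    Ip (Sent.impl (Sent.tr φ) ψ) = kimp (Ip φ) (Ip ψ) := by
  rw [hIp.1.2.2.2.1, hIp.2]

theorem ClassicalConditions.impl_tr_of_ne_t {Ip : Sent → K3} {If' : Sent → Bool}
    (hIf : ClassicalConditions If') (hT : FinalTruth Ip If') {φ : Sent} (hφ : Ip φ ≠ K3.t)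
    (ψ : Sent) : If' (Sent.impl (Sent.tr φ) ψ) = true := by
  rw [hIf.2.2.2.1, hT, decide_eq_false hφ, Bool.not_false, Bool.true_or]

theorem curry_general (Ip : Sent → K3) (If' : Sent → Bool) (C l : Sent)
    (hIp : FixedPoint Ip)
    (hIf : ClassicalConditions If')
    (hT : FinalTruth Ip If')
    (hlp : Ip l = K3.f)
    (hCp : Ip C = Ip (Sent.impl (Sent.tr C) l))
    (hCf : If' C = If' (Sent.impl (Sent.tr C) l)) :
    (∀ x : K3, x = kimp x K3.f → x = K3.u) ∧
    Ip C = K3.u ∧ If' C = true := by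
  have hCu : Ip C = K3.u := (eq_kimp_f_iff _).1 (hCp.trans (by rw [hIp.impl_tr, hlp]))
  refine ⟨fun x => (eq_kimp_f_iff x).1, hCu, ?_⟩
  rw [hCf]
  exact hIf.impl_tr_of_ne_t hT (by rw [hCu]; decide) l

/-- Curry's sentence `C = (T⌜C⌝ → l)`, with `l` false in both semantics, is
undetermined in the primary semantics and true in the final semantics. -/
theorem curry (Ip : Sent → K3) (If' : Sent → Bool) (C l : Sent)
    (hIp : FixedPoint Ip)
    (hIf : ClassicalConditions If')
    (hT : FinalTruth Ip If')
    (hlp : Ip l = K3.f) (hlf : If' l = false)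
    (hCp : Ip C = Ip (Sent.impl (Sent.tr C) l))
    (hCf : If' C = If' (Sent.impl (Sent.tr C) l)) :
    (∀ x : K3, x = kimp x K3.f → x = K3.u) ∧
    Ip C = K3.u ∧ If' C = true :=
  curry_general Ip If' C l hIp hIf hT hlp hCp hCf
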